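/- Let k, n be real numbers with s + t = k - 6, s ≤ t + 2, s, t ≥ 0, k ≥ 15, n ≥ k - 1, and u = n - k + 1. Then p₁(n-4) + p₂(n-1) < 0, where p₁(λ) = (s-t-2)λ^4 + 4(s-t-2)λ^3 - 8λ² - 16λ - 7s - 14tu - 12u and p₂(λ) = -2(u+1)(s-t-2)λ² - 4(u+3)(s-t-2)λ + 14su + 7t + 6. -/
import Mathlib


/-- `p₁(λ)`. -/
def p1 (s t u lam : ℝ) : ℝ :=
  (s - t - 2) * lam ^ 4 + 4 * (s - t - 2) * lam ^ 3 - 8 * lam ^ 2 - 16 * lam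
    - 7 * s - 14 * t * u - 12 * u

/-- `p₂(λ)`. -/
def p2 (s t u lam : ℝ) : ℝ :=
  -2 * (u + 1) * (s - t - 2) * lam ^ 2 - 4 * (u + 3) * (s - t - 2) * lam
    + 14 * s * u + 7 * t + 6

lemma aux_p1p2 (s d u : ℝ) (hs : 0 ≤ s) (hd : 0 ≤ d) (hu : 0 ≤ u)
    (hm : 11 ≤ 2*s + d) :
    -(d * (2*s + d + u)^4)
    + (42*d + 4*d^2 + 8*d^3 - 8*s*d + 32*s*d^2 - 32*s^2 + 32*s^2*d)
    + (16 - 2*d + 28*d^2 + 2*d^3 - 32*s + 56*s*d + 8*s*d^2 + 8*s^2*d) * u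
    + (-8 + 20*d + 4*d^2 + 8*s*d) * u^2
    + 2*d*u^3 < 0 := by
  nlinarith [mul_nonneg hd (pow_pos (show (0:ℝ) < 2*s+d+u by nlinarith) 3).le,
    mul_nonneg (mul_nonneg hd hu) (sq_nonneg (2*s+d+u)),
    mul_nonneg (mul_nonneg hd (show (0:ℝ) ≤ 2*s+d-11 by linarith)) (pow_pos (show (0:ℝ) < 2*s+d+u by nlinarith) 3).le,
    mul_nonneg (mul_nonneg (mul_nonneg hd hu) hu) (show (0:ℝ) ≤ 2*s+d+u by nlinarith),
    mul_nonneg (mul_nonneg (mul_nonneg hd hu) hu) hu,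
    mul_nonneg hs hu, mul_nonneg hd hu, mul_nonneg hs hd, sq_nonneg u,
    mul_nonneg (mul_nonneg hs hs) hd, mul_nonneg (mul_nonneg hs hd) hd,
    mul_nonneg (mul_nonneg hs hs) hu, mul_nonneg (mul_nonneg hd hd) hu,
    mul_nonneg (mul_nonneg hs hd) hu]

theorem p1_add_p2_neg (k n s t u : ℝ) (hst : s + t = k - 6) (hs2 : s ≤ t + 2)
    (hs : 0 ≤ s) (ht : 0 ≤ t) (hk : 15 ≤ k) (hn : k - 1 ≤ n)
    (hu : u = n - k + 1) :
    p1 s t u (n - 4) + p2 s t u (n - 1) < 0 := by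
  have key := aux_p1p2 s (t + 2 - s) (n - s - t - 5)
    hs (by linarith) (by linarith) (by linarith)
  have heq : p1 s t u (n - 4) + p2 s t u (n - 1) =
      -((t + 2 - s) * (2*s + (t + 2 - s) + (n - s - t - 5))^4)
      + (42*(t + 2 - s) + 4*(t + 2 - s)^2 + 8*(t + 2 - s)^3 - 8*s*(t + 2 - s)
        + 32*s*(t + 2 - s)^2 - 32*s^2 + 32*s^2*(t + 2 - s))
      + (16 - 2*(t + 2 - s) + 28*(t + 2 - s)^2 + 2*(t + 2 - s)^3 - 32*s
        + 56*s*(t + 2 - s) + 8*s*(t + 2 - s)^2 + 8*s^2*(t + 2 - s)) * (n - s - t - 5)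
      + (-8 + 20*(t + 2 - s) + 4*(t + 2 - s)^2 + 8*s*(t + 2 - s)) * (n - s - t - 5)^2
      + 2*(t + 2 - s)*(n - s - t - 5)^3 := by
    have hu' : u = n - s - t - 5 := by rw [hu]; linarith
    subst hu'
    unfold p1 p2
    ring
  linarith [heq ▸ key]
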